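/- With processing delay exactly D (instead of D + 1), double withdrawal is still prevented: if two withdrawals with the same nullifier are submitted at times t₁ ≤ t₂ on the two chains, then at time t₂ + D each chain can see both events, hence at most the earlier pending withdrawal can escape detection at its own finalization only if the later one was not yet submitted; but then when the later is finalized at t₂ + D, the earlier event (submitted at t₁ ≤ t₂) is visible, so at least one of the two withdrawals is cancelled — i.e., not both are finalized. -/

import Mathlib

/-- A withdrawal event: the chain it was submitted on (two chains, modeled by
`Bool`), its nullifier, and its submission time. -/
structure WEvent (N : Type) where
  chain : Bool
  nullifier : N
  time : ℕ

/-- An event is visible on its own chain from its submission time on, and on the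
other chain from time `time + D` on. -/
def visible {N : Type} (D : ℕ) (e : WEvent N) (c : Bool) (t : ℕ) : Prop :=
  if e.chain = c then e.time ≤ t else e.time + D ≤ t

/-- A withdrawal event `e` is finalized, with processing delay exactly `D`, iff
at time `e.time + D` no other event with the same nullifier is visible on the
finalizing chain `e.chain`. -/
def finalized {N : Type} (D : ℕ) (events : Set (WEvent N)) (e : WEvent N) : Prop :=
  e ∈ events ∧ ∀ e' ∈ events, e' ≠ e → e'.nullifier = e.nullifier →
    ¬ visible D e' e.chain (e.time + D)

theorem visible_add_delay {N : Type} (D : ℕ) {e : WEvent N} {t : ℕ} (c : Bool)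
    (h : e.time ≤ t) : visible D e c (t + D) := by
  unfold visible
  split_ifs <;> omega

theorem no_double_withdrawal_delay_D_general {N : Type} (D : ℕ) (events : Set (WEvent N))
    (e₁ e₂ : WEvent N) (h₁ : e₁ ∈ events)
    (hchains : e₁.chain ≠ e₂.chain)
    (hsn : e₁.nullifier = e₂.nullifier) (horder : e₁.time ≤ e₂.time) :
    ¬ (finalized D events e₁ ∧ finalized D events e₂) := by
  rintro ⟨-, -, hf₂⟩
  exact hf₂ e₁ h₁ (ne_of_apply_ne WEvent.chain hchains) hsn (visible_add_delay D _ horder)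

/-- With processing delay exactly `D`, double withdrawal across the two chains is
still prevented: if two withdrawals with the same nullifier are submitted on the
two different chains at times `t₁ ≤ t₂`, then not both are finalized — when the
later one is processed at time `t₂ + D`, the earlier event is already visible on
its chain, so at least one of the two is cancelled. -/
theorem no_double_withdrawal_delay_D {N : Type} (D : ℕ) (events : Set (WEvent N))
    (e₁ e₂ : WEvent N) (h₁ : e₁ ∈ events) (h₂ : e₂ ∈ events)
    (hchains : e₁.chain ≠ e₂.chain)
    (hsn : e₁.nullifier = e₂.nullifier) (horder : e₁.time ≤ e₂.time) :
    ¬ (finalized D events e₁ ∧ finalized D events e₂) :=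
  no_double_withdrawal_delay_D_general D events e₁ e₂ h₁ hchains hsn horder
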